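/- Assume H is connected and ∑_{v∈V} s_v = 0. Let μ∈𝓜(s), define r∈ℝ^E by r_e = μ_e/w_e, let μ* be a minimizer of q over 𝓜(s), let μ̄ be a minimizer of ν ↦ ∑_{e∈E} r_e ν_e over 𝓜(s), and set δ = q(μ) − q(μ*). Then 0 ≤ 2q(μ) − L_s(r) = ∑_{e∈E} r_e (μ_e − μ̄_e) ≤ δ + √(2δ)·‖μ − μ̄‖_{w⁻¹}. Moreover, if x_r∈𝓧₀ attains L_s(r), i.e. x_r maximizes ⟨s,x⟩ over x∈𝓧₀ with R_e(x) ≤ r_e for all e, then 𝓟(x_r) − OPT ≤ √(2δ)·‖μ − μ̄‖_{w⁻¹}, where OPT = min_{x∈𝓧₀} 𝓟(x). -/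

import Mathlib

/-!
`L_s(r)` is the value of a linear program whose constraint rows `(1_u - 1_v, r_e)` span a finitely
generated, hence closed, cone; Farkas' lemma for that cone turns an optimal feasible mass `μ̄` into
strong duality `L_s(r) = ⟨r, μ̄⟩`, while `2 q(μ) = ⟨r, μ⟩`, so the gap is `⟨r, μ - μ̄⟩`. Writing
`r = (μ - μ*) / w + μ* / w`, first-order optimality of `μ*` bounds the second part by `δ` and gives
`‖μ - μ*‖_{w⁻¹} ≤ √(2δ)`, so Cauchy–Schwarz bounds the first. For the last claim,
`𝓔(x_r) ≤ q(μ)` because `R_e(x_r) ≤ μ_e / w_e`, and `OPT ≥ -q(μ*)` by weak duality.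
-/

open Finset

section

variable {V : Type*} [Fintype V] [DecidableEq V] [Nonempty V]
variable {E : Type*} [Fintype E]

/-- The edge range `R_e(x) = max_{u∈e} x_u - min_{v∈e} x_v`. -/
noncomputable def eRange (edge : E → Finset V) (hne : ∀ e, (edge e).Nonempty)
    (x : V → ℝ) (e : E) : ℝ :=
  (edge e).sup' (hne e) x - (edge e).inf' (hne e) x

/-- Weighted degree `d_v = ∑_{e ∋ v} w_e`. -/
noncomputable def degw (edge : E → Finset V) (w : E → ℝ) (v : V) : ℝ :=
  ∑ e ∈ univ.filter (fun e => v ∈ edge e), w e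

/-- Membership in `𝓧₀`: weighted zero-mean. -/
def memX0 (edge : E → Finset V) (w : E → ℝ) (x : V → ℝ) : Prop :=
  ∑ v, degw edge w v * x v = 0

/-- The energy `𝓔_H(x)`. -/
noncomputable def energyH (edge : E → Finset V) (hne : ∀ e, (edge e).Nonempty)
    (w : E → ℝ) (x : V → ℝ) : ℝ :=
  (1 / 2) * ∑ e, w e * (eRange edge hne x e) ^ 2

/-- The Poisson objective `𝓟(x) = 𝓔_H(x) - ⟨s,x⟩`. -/
noncomputable def Pobj (edge : E → Finset V) (hne : ∀ e, (edge e).Nonempty)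
    (w : E → ℝ) (s : V → ℝ) (x : V → ℝ) : ℝ :=
  energyH edge hne w x - ∑ v, s v * x v

/-- Connectivity of the hypergraph. -/
def HConn (edge : E → Finset V) : Prop :=
  ∀ u v : V, ∃ (k : ℕ) (p : Fin (k + 1) → V) (c : Fin k → E),
    p 0 = u ∧ p (Fin.last k) = v ∧
    ∀ i : Fin k, p i.castSucc ∈ edge (c i) ∧ p i.succ ∈ edge (c i)

/-- The quadratic mass objective `q(μ) = (1/2) ∑_e μ_e²/w_e`. -/
noncomputable def qObj (w : E → ℝ) (μ : E → ℝ) : ℝ := (1 / 2) * ∑ e, (μ e) ^ 2 / w e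

/-- The weighted norm `‖z‖_{w⁻¹} = (∑_e z_e²/w_e)^{1/2}`. -/
noncomputable def wInvNorm (w : E → ℝ) (z : E → ℝ) : ℝ :=
  Real.sqrt (∑ e, (z e) ^ 2 / w e)

/-- The set `𝓜(s)` of feasible edge-mass vectors for demand `s`. -/
def MassSet (edge : E → Finset V) (s : V → ℝ) : Set (E → ℝ) :=
  {μ | (∀ e, 0 ≤ μ e) ∧ ∃ p n : E → V → ℝ,
    (∀ e, ∀ v ∈ edge e, 0 ≤ p e v) ∧ (∀ e, ∀ v ∈ edge e, 0 ≤ n e v) ∧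
    (∀ v, ∑ e ∈ univ.filter (fun e => v ∈ edge e), (p e v - n e v) = s v) ∧
    (∀ e, ∑ v ∈ edge e, p e v = μ e) ∧ (∀ e, ∑ v ∈ edge e, n e v = μ e)}

/-- The support value `L_s(r)`, as a supremum. -/
noncomputable def suppVal (edge : E → Finset V) (hne : ∀ e, (edge e).Nonempty)
    (w : E → ℝ) (s : V → ℝ) (r : E → ℝ) : ℝ :=
  sSup {c : ℝ | ∃ x : V → ℝ, memX0 edge w x ∧
    (∀ e, eRange edge hne x e ≤ r e) ∧ c = ∑ v, s v * x v}

section Farkas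

variable {ι F : Type*} [Fintype ι] [NormedAddCommGroup F] [NormedSpace ℝ F]

theorem Fintype.sum_subtype_ne_of_eq_zero {M : Type*} [AddCommMonoid M] [DecidableEq ι]
    {f : ι → M} {j : ι} (hf : f j = 0) : ∑ i : {i // i ≠ j}, f i = ∑ i, f i := by
  rw [← Finset.sum_subtype (Finset.univ.erase j) (by simp), Finset.sum_erase _ hf]

theorem linearCombination_subtype_ne_image_Ici_subset [DecidableEq ι] (g : ι → F) (j : ι) :
    Fintype.linearCombination ℝ (fun i : {i // i ≠ j} => g i.1) '' Set.Ici 0 ⊆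
      Fintype.linearCombination ℝ g '' Set.Ici 0 := by
  rintro _ ⟨c, hc, rfl⟩
  refine ⟨fun i => if h : i = j then 0 else c ⟨i, h⟩, fun i => ?_, ?_⟩
  · dsimp only
    split_ifs
    exacts [le_rfl, hc _]
  · simp only [Fintype.linearCombination_apply]
    rw [← Fintype.sum_subtype_ne_of_eq_zero (j := j) (by simp)]
    exact Finset.sum_congr rfl fun i _ => by simp [i.2]

/-- Carathéodory's reduction: a linear relation with a positive coefficient lets one
coefficient of any nonnegative combination be cancelled. -/
theorem linearCombination_image_Ici_subset_iUnion [DecidableEq ι] (g : ι → F) {a : ι → ℝ}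
    (ha : Fintype.linearCombination ℝ g a = 0) (hpos : ∃ j, 0 < a j) :
    Fintype.linearCombination ℝ g '' Set.Ici 0 ⊆
      ⋃ j, Fintype.linearCombination ℝ (fun i : {i // i ≠ j} => g i.1) '' Set.Ici 0 := by
  rintro _ ⟨c, hc, rfl⟩
  obtain ⟨j, hj, hmin⟩ := Finset.exists_min_image {i | 0 < a i} (fun i => c i / a i)
    (by obtain ⟨j, hj⟩ := hpos; exact ⟨j, by simpa using hj⟩)
  simp only [Finset.mem_filter, Finset.mem_univ, true_and] at hj hmin
  set t := c j / a j
  have ht : 0 ≤ t := div_nonneg (hc j) hj.le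
  have hc' : ∀ i, 0 ≤ c i - t * a i := fun i => by
    rcases lt_or_ge 0 (a i) with hai | hai
    · have := hmin i hai
      rw [le_div_iff₀ hai] at this
      linarith
    · have hci : 0 ≤ c i := hc i
      nlinarith
  have hcj : c j - t * a j = 0 := by simp only [t, div_mul_cancel₀ _ hj.ne', sub_self]
  refine Set.mem_iUnion.2 ⟨j, fun i => c i - t * a i, fun i => hc' i, ?_⟩
  have hsum : Fintype.linearCombination ℝ g (c - t • a) = Fintype.linearCombination ℝ g c := by
    rw [map_sub, map_smul, ha, smul_zero, sub_zero]
  rw [← hsum]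
  simp only [Fintype.linearCombination_apply, Pi.sub_apply, Pi.smul_apply, smul_eq_mul]
  exact Fintype.sum_subtype_ne_of_eq_zero (f := fun i => (c i - t * a i) • g i) (by simp [hcj])

theorem isClosed_linearCombination_image_Ici (g : ι → F) :
    IsClosed (Fintype.linearCombination ℝ g '' Set.Ici 0) := by
  induction h : Fintype.card ι using Nat.strong_induction_on generalizing ι with
  | _ n ih =>
  classical
  by_cases hinj : LinearMap.ker (Fintype.linearCombination ℝ g) = ⊥
  · exact (LinearMap.isClosedEmbedding_of_injective hinj).isClosedMap _ isClosed_Ici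
  obtain ⟨a, ha, ha0⟩ := Submodule.exists_mem_ne_zero_of_ne_bot hinj
  rw [LinearMap.mem_ker] at ha
  have hpos : ∃ b : ι → ℝ, Fintype.linearCombination ℝ g b = 0 ∧ ∃ j, 0 < b j := by
    obtain ⟨j, hj⟩ := Function.ne_iff.1 ha0
    rcases lt_or_gt_of_ne hj with hneg | hpos'
    · exact ⟨-a, by rw [map_neg, ha, neg_zero], j, by simpa using hneg⟩
    · exact ⟨a, ha, j, hpos'⟩
  obtain ⟨b, hb, hbpos⟩ := hpos
  have hcard : ∀ j : ι, Fintype.card {i // i ≠ j} < n := fun j =>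
    h ▸ Fintype.card_subtype_lt (p := (· ≠ j)) (x := j) (by simp)
  rw [(linearCombination_image_Ici_subset_iUnion g hb hbpos).antisymm
    (Set.iUnion_subset (linearCombination_subtype_ne_image_Ici_subset g))]
  exact isClosed_iUnion_of_finite fun j => ih _ (hcard j) _ rfl

theorem exists_dual_of_notMem_linearCombination_image_Ici (g : ι → F) {b : F}
    (hb : b ∉ Fintype.linearCombination ℝ g '' Set.Ici 0) :
    ∃ f : StrongDual ℝ F, (∀ i, f (g i) ≤ 0) ∧ 0 < f b := by
  classical
  obtain ⟨f, u, hfu, hub⟩ := geometric_hahn_banach_closed_point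
    ((convex_Ici 0).linear_image _) (isClosed_linearCombination_image_Ici g) hb
  have hu : 0 < u := by simpa using hfu 0 ⟨0, Set.mem_Ici.2 le_rfl, map_zero _⟩
  refine ⟨f, fun i => ?_, hu.trans hub⟩
  by_contra! hi
  have := hfu _ ⟨Pi.single i (u / f (g i)), Pi.single_nonneg.2 (div_nonneg hu.le hi.le), rfl⟩
  simp [div_mul_cancel₀ _ hi.ne'] at this

theorem LinearMap.apply_prod_eq_sum {R M : Type*} [CommSemiring R] [AddCommMonoid M]
    [Module R M] [DecidableEq ι] (f : (ι → R) × R →ₗ[R] M) (x : ι → R) (t : R) :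
    f (x, t) = ∑ i, x i • f (Pi.single i 1, 0) + t • f (0, 1) := by
  have : (x, t) = ∑ i, x i • ((Pi.single i 1 : ι → R), (0 : R)) + t • ((0 : ι → R), (1 : R)) := by
    ext
    · simp [Prod.fst_sum, Finset.sum_apply, Pi.single_apply]
    · simp [Prod.snd_sum]
  simp only [this, map_add, map_sum, map_smul]

end Farkas

section Quadratic

variable {E : Type*} [Fintype E] {w : E → ℝ}

theorem qObj_smul (t : ℝ) (d : E → ℝ) : qObj w (fun e => t * d e) = t ^ 2 * qObj w d := by
  simp only [qObj, Finset.mul_sum]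
  exact Finset.sum_congr rfl fun e _ => by ring

theorem qObj_sub_qObj (hw : ∀ e, w e ≠ 0) (μ ν : E → ℝ) :
    qObj w ν - qObj w μ = ∑ e, μ e / w e * (ν e - μ e) + qObj w (fun e => ν e - μ e) := by
  simp only [qObj, Finset.mul_sum, ← Finset.sum_sub_distrib, ← Finset.sum_add_distrib]
  exact Finset.sum_congr rfl fun e _ => by field_simp [hw e]; ring

theorem two_mul_qObj (μ : E → ℝ) : 2 * qObj w μ = ∑ e, μ e ^ 2 / w e := by
  rw [qObj, ← mul_assoc, mul_one_div_cancel two_ne_zero, one_mul]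

theorem qObj_nonneg (hw : ∀ e, 0 < w e) (μ : E → ℝ) : 0 ≤ qObj w μ :=
  mul_nonneg (by norm_num) (Finset.sum_nonneg fun e _ => div_nonneg (sq_nonneg _) (hw e).le)

theorem wInvNorm_eq_sqrt_qObj (z : E → ℝ) : wInvNorm w z = √(2 * qObj w z) := by
  rw [wInvNorm, two_mul_qObj]

theorem sum_div_mul_le_wInvNorm_mul (hw : ∀ e, 0 < w e) (a b : E → ℝ) :
    ∑ e, a e / w e * b e ≤ wInvNorm w a * wInvNorm w b := by
  have hsq : ∀ (z : E → ℝ) e, (z e / √(w e)) ^ 2 = z e ^ 2 / w e := fun z e => by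
    rw [div_pow, Real.sq_sqrt (hw e).le]
  have := Real.sum_mul_le_sqrt_mul_sqrt univ (fun e => a e / √(w e)) (fun e => b e / √(w e))
  simp only [hsq] at this
  rw [wInvNorm, wInvNorm]
  convert this using 2 with e
  rw [div_mul_div_comm, Real.mul_self_sqrt (hw e).le, div_mul_eq_mul_div]

/-- First-order optimality: `μ / w` is the gradient of `q` at `μ`. -/
theorem sum_div_mul_sub_nonneg_of_forall_qObj_le (hw : ∀ e, 0 < w e) {K : Set (E → ℝ)}
    (hK : Convex ℝ K) {μ : E → ℝ} (hμ : μ ∈ K) (hmin : ∀ ν ∈ K, qObj w μ ≤ qObj w ν)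
    {ν : E → ℝ} (hν : ν ∈ K) : 0 ≤ ∑ e, μ e / w e * (ν e - μ e) := by
  set A := ∑ e, μ e / w e * (ν e - μ e)
  set Q := qObj w (fun e => ν e - μ e)
  have hstep : ∀ t ∈ Set.Ioc (0 : ℝ) 1, 0 ≤ A + t * Q := by
    rintro t ⟨ht0, ht1⟩
    have hmem := hK.add_smul_sub_mem hμ hν ⟨ht0.le, ht1⟩
    have h := qObj_sub_qObj (fun e => (hw e).ne') μ (μ + t • (ν - μ))
    simp only [Pi.add_apply, Pi.smul_apply, Pi.sub_apply, smul_eq_mul, add_sub_cancel_left,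
      qObj_smul] at h
    have hA : ∑ e, μ e / w e * (t * (ν e - μ e)) = t * A := by
      rw [Finset.mul_sum]
      exact Finset.sum_congr rfl fun e _ => by ring
    have : 0 ≤ t * (A + t * Q) := by linarith [hmin _ hmem]
    exact nonneg_of_mul_nonneg_right (by linarith) ht0
  have hlim : Filter.Tendsto (fun t => A + t * Q) (nhdsWithin 0 (Set.Ioi 0)) (nhds (A + 0 * Q)) :=
    ((continuous_const.add (continuous_id.mul continuous_const)).tendsto 0).mono_left
      nhdsWithin_le_nhds
  rw [zero_mul, add_zero] at hlim
  exact ge_of_tendsto hlim (Filter.eventually_of_mem (Ioc_mem_nhdsGT one_pos) hstep)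

theorem sum_div_mul_sub_le (hw : ∀ e, 0 < w e) {μ μ' μbar : E → ℝ}
    (hμ : 0 ≤ ∑ e, μ' e / w e * (μ e - μ' e)) (hbar : 0 ≤ ∑ e, μ' e / w e * (μbar e - μ' e)) :
    ∑ e, μ e / w e * (μ e - μbar e) ≤ qObj w μ - qObj w μ' +
      √(2 * (qObj w μ - qObj w μ')) * wInvNorm w (fun e => μ e - μbar e) := by
  have hδ := qObj_sub_qObj (fun e => (hw e).ne') μ' μ
  have hQ := qObj_nonneg hw (fun e => μ e - μ' e)
  have hsplit : ∑ e, μ e / w e * (μ e - μbar e) = ∑ e, (μ e - μ' e) / w e * (μ e - μbar e)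
      + (∑ e, μ' e / w e * (μ e - μ' e) - ∑ e, μ' e / w e * (μbar e - μ' e)) := by
    rw [← Finset.sum_sub_distrib, ← Finset.sum_add_distrib]
    exact Finset.sum_congr rfl fun e _ => by ring
  have hCS := sum_div_mul_le_wInvNorm_mul hw (fun e => μ e - μ' e) (fun e => μ e - μbar e)
  have hnorm : wInvNorm w (fun e => μ e - μ' e) ≤ √(2 * (qObj w μ - qObj w μ')) := by
    rw [wInvNorm_eq_sqrt_qObj]
    exact Real.sqrt_le_sqrt (by linarith)
  have := mul_le_mul_of_nonneg_right hnorm (Real.sqrt_nonneg (∑ e, (μ e - μbar e) ^ 2 / w e))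
  rw [← wInvNorm] at this
  linarith

end Quadratic

section Hypergraph

variable {V E : Type*} (edge : E → Finset V) (hne : ∀ e, (edge e).Nonempty)

theorem eRange_le_iff {x : V → ℝ} {e : E} {a : ℝ} :
    eRange edge hne x e ≤ a ↔ ∀ u ∈ edge e, ∀ v ∈ edge e, x u - x v ≤ a := by
  simp only [eRange, sub_le_iff_le_add, Finset.sup'_le_iff]
  refine forall₂_congr fun u _ => ?_
  rw [← sub_le_iff_le_add', Finset.le_inf'_iff]
  exact forall₂_congr fun v _ => by constructor <;> intro h <;> linarith

theorem eRange_nonneg (x : V → ℝ) (e : E) : 0 ≤ eRange edge hne x e := by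
  obtain ⟨v, hv⟩ := hne e
  exact sub_nonneg.2 ((Finset.inf'_le x hv).trans (Finset.le_sup' x hv))

theorem eRange_const (c : ℝ) (e : E) : eRange edge hne (fun _ => c) e = 0 := by
  simp [eRange]

theorem eRange_sub_const (x : V → ℝ) (c : ℝ) (e : E) :
    eRange edge hne (fun v => x v - c) e = eRange edge hne x e := by
  refine le_antisymm ((eRange_le_iff edge hne).2 fun u hu v hv => ?_)
    ((eRange_le_iff edge hne).2 fun u hu v hv => ?_)
  · have := (eRange_le_iff edge hne (x := x)).1 le_rfl u hu v hv
    linarith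
  · have := (eRange_le_iff edge hne (x := fun v => x v - c)).1 le_rfl u hu v hv
    linarith

variable [Fintype E] {w : E → ℝ}

theorem energyH_le_qObj (hw : ∀ e, 0 < w e) {μ : E → ℝ} {x : V → ℝ}
    (hx : ∀ e, eRange edge hne x e ≤ μ e / w e) : energyH edge hne w x ≤ qObj w μ := by
  refine mul_le_mul_of_nonneg_left (Finset.sum_le_sum fun e _ => ?_) (by norm_num)
  calc w e * eRange edge hne x e ^ 2 ≤ w e * (μ e / w e) ^ 2 :=
        mul_le_mul_of_nonneg_left (pow_le_pow_left₀ (eRange_nonneg edge hne x e) (hx e) 2)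
          (hw e).le
    _ = μ e ^ 2 / w e := by field_simp [(hw e).ne']

variable [DecidableEq V]

theorem convex_massSet (s : V → ℝ) : Convex ℝ (MassSet edge s) := by
  rintro μ₁ ⟨h₁, p₁, n₁, hp₁, hn₁, hnet₁, hpμ₁, hnμ₁⟩ μ₂ ⟨h₂, p₂, n₂, hp₂, hn₂, hnet₂, hpμ₂, hnμ₂⟩
    a b ha hb hab
  refine ⟨fun e => ?_, a • p₁ + b • p₂, a • n₁ + b • n₂, fun e v hv => ?_, fun e v hv => ?_,
    fun v => ?_, fun e => ?_, fun e => ?_⟩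
  · simp only [Pi.add_apply, Pi.smul_apply, smul_eq_mul]
    exact add_nonneg (mul_nonneg ha (h₁ e)) (mul_nonneg hb (h₂ e))
  · simp only [Pi.add_apply, Pi.smul_apply, smul_eq_mul]
    exact add_nonneg (mul_nonneg ha (hp₁ e v hv)) (mul_nonneg hb (hp₂ e v hv))
  · simp only [Pi.add_apply, Pi.smul_apply, smul_eq_mul]
    exact add_nonneg (mul_nonneg ha (hn₁ e v hv)) (mul_nonneg hb (hn₂ e v hv))
  · calc _ = a * ∑ e ∈ univ.filter (fun e => v ∈ edge e), (p₁ e v - n₁ e v)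
          + b * ∑ e ∈ univ.filter (fun e => v ∈ edge e), (p₂ e v - n₂ e v) := by
          simp only [Finset.mul_sum, ← Finset.sum_add_distrib, Pi.add_apply, Pi.smul_apply,
            smul_eq_mul]
          exact Finset.sum_congr rfl fun _ _ => by ring
      _ = s v := by rw [hnet₁, hnet₂, ← add_mul, hab, one_mul]
  · simp [Finset.sum_add_distrib, ← Finset.mul_sum, hpμ₁, hpμ₂]
  · simp [Finset.sum_add_distrib, ← Finset.mul_sum, hnμ₁, hnμ₂]

variable [Fintype V]

theorem sum_mul_eq_sum_sum_of_net {s : V → ℝ} {p n : E → V → ℝ}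
    (hnet : ∀ v, ∑ e ∈ univ.filter (fun e => v ∈ edge e), (p e v - n e v) = s v) (x : V → ℝ) :
    ∑ v, s v * x v = ∑ e, ∑ v ∈ edge e, (p e v - n e v) * x v := by
  simp_rw [← hnet, Finset.sum_mul, Finset.sum_filter]
  rw [Finset.sum_comm]
  simp [Finset.sum_ite_mem]

theorem sum_eq_zero_of_mem_massSet {s : V → ℝ} {ν : E → ℝ} (hν : ν ∈ MassSet edge s) :
    ∑ v, s v = 0 := by
  obtain ⟨-, p, n, -, -, hnet, hp, hn⟩ := hν
  simpa [Finset.sum_sub_distrib, hp, hn] using sum_mul_eq_sum_sum_of_net edge hnet 1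

theorem sum_mul_le_sum_mul_eRange {s : V → ℝ} {ν : E → ℝ} (hν : ν ∈ MassSet edge s)
    (x : V → ℝ) : ∑ v, s v * x v ≤ ∑ e, ν e * eRange edge hne x e := by
  obtain ⟨-, p, n, hp0, hn0, hnet, hp, hn⟩ := hν
  rw [sum_mul_eq_sum_sum_of_net edge hnet]
  refine Finset.sum_le_sum fun e _ => ?_
  have hsup : ∑ v ∈ edge e, p e v * x v ≤ ν e * (edge e).sup' (hne e) x := by
    rw [← hp e, Finset.sum_mul]
    exact Finset.sum_le_sum fun v hv =>
      mul_le_mul_of_nonneg_left (Finset.le_sup' x hv) (hp0 e v hv)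
  have hinf : ν e * (edge e).inf' (hne e) x ≤ ∑ v ∈ edge e, n e v * x v := by
    rw [← hn e, Finset.sum_mul]
    exact Finset.sum_le_sum fun v hv =>
      mul_le_mul_of_nonneg_left (Finset.inf'_le x hv) (hn0 e v hv)
  simp only [sub_mul, Finset.sum_sub_distrib, eRange, mul_sub]
  linarith

theorem sum_mul_le_of_eRange_le {s : V → ℝ} {ν : E → ℝ} (hν : ν ∈ MassSet edge s)
    {r : E → ℝ} {x : V → ℝ} (hx : ∀ e, eRange edge hne x e ≤ r e) :
    ∑ v, s v * x v ≤ ∑ e, r e * ν e :=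
  (sum_mul_le_sum_mul_eRange edge hne hν x).trans <| Finset.sum_le_sum fun e _ => by
    rw [mul_comm (r e)]
    exact mul_le_mul_of_nonneg_left (hx e) (hν.1 e)

theorem exists_memX0_eRange_eq (hw : ∀ e, 0 ≤ w e) {s : V → ℝ}
    (hs : ∑ v, s v = 0) (x : V → ℝ) :
    ∃ x', memX0 edge w x' ∧ (∀ e, eRange edge hne x' e = eRange edge hne x e) ∧
      ∑ v, s v * x' v = ∑ v, s v * x v := by
  set c := (∑ v, degw edge w v * x v) / ∑ v, degw edge w v
  refine ⟨fun v => x v - c, ?_, eRange_sub_const edge hne x c, ?_⟩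
  · have hd : ∀ v, 0 ≤ degw edge w v := fun v => Finset.sum_nonneg fun e _ => hw e
    unfold memX0
    by_cases hD : ∑ v, degw edge w v = 0
    · simp [(Finset.sum_eq_zero_iff_of_nonneg fun v _ => hd v).1 hD]
    · simp only [mul_sub, Finset.sum_sub_distrib, ← Finset.sum_mul, c]
      rw [mul_div_cancel₀ _ hD, sub_self]
  · simp only [mul_sub, Finset.sum_sub_distrib, ← Finset.sum_mul, hs, zero_mul, sub_zero]

variable {s : V → ℝ} {r : E → ℝ}

theorem le_suppVal (hw : ∀ e, 0 ≤ w e) {ν : E → ℝ} (hν : ν ∈ MassSet edge s) {x : V → ℝ}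
    (hx : ∀ e, eRange edge hne x e ≤ r e) : ∑ v, s v * x v ≤ suppVal edge hne w s r := by
  obtain ⟨x', hx'0, hx'R, hx's⟩ :=
    exists_memX0_eRange_eq edge hne hw (sum_eq_zero_of_mem_massSet edge hν) x
  rw [← hx's]
  refine le_csSup ⟨∑ e, r e * ν e, ?_⟩ ⟨x', hx'0, fun e => (hx'R e).trans_le (hx e), rfl⟩
  rintro _ ⟨y, -, hy, rfl⟩
  exact sum_mul_le_of_eRange_le edge hne hν hy

theorem suppVal_le (hr : ∀ e, 0 ≤ r e) {ν : E → ℝ} (hν : ν ∈ MassSet edge s) :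
    suppVal edge hne w s r ≤ ∑ e, r e * ν e := by
  refine csSup_le ⟨0, fun _ => 0, by simp [memX0], fun e => ?_, by simp⟩ ?_
  · rw [eRange_const]
    exact hr e
  · rintro _ ⟨y, -, hy, rfl⟩
    exact sum_mul_le_of_eRange_le edge hne hν hy

/-- The rows `(1_u - 1_v, r_e)`, `u, v ∈ e`, of the constraints `x_u - x_v ≤ r_e` of the linear
program defining `L_s(r)`, together with the slack row `(0, 1)` at `none`. -/
def suppValRow (r : E → ℝ) : Option (E × V × V) → (V → ℝ) × ℝ
  | none => (0, 1)
  | some (e, u, v) =>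
    if u ∈ edge e ∧ v ∈ edge e then (Pi.single u 1 - Pi.single v 1, r e) else 0

theorem exists_mem_massSet_of_eq_linearCombination {c : Option (E × V × V) → ℝ} (hc : 0 ≤ c)
    {σ : ℝ} (hsσ : Fintype.linearCombination ℝ (suppValRow edge r) c = (s, σ)) :
    ∃ ν ∈ MassSet edge s, ∑ e, r e * ν e ≤ σ := by
  set y : E → V → V → ℝ := fun e u v => c (some (e, u, v))
  have hy : ∀ e u v, 0 ≤ y e u v := fun e u v => hc _
  refine ⟨fun e => ∑ u ∈ edge e, ∑ v ∈ edge e, y e u v, ⟨fun e => ?_,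
    fun e u => ∑ v ∈ edge e, y e u v, fun e v => ∑ u ∈ edge e, y e u v,
    fun e u _ => ?_, fun e v _ => ?_, fun w => ?_, fun e => rfl, fun e => Finset.sum_comm⟩, ?_⟩
  · exact Finset.sum_nonneg fun u _ => Finset.sum_nonneg fun v _ => hy e u v
  · exact Finset.sum_nonneg fun v _ => hy e u v
  · exact Finset.sum_nonneg fun u _ => hy e u v
  · rw [show s w = (Fintype.linearCombination ℝ (suppValRow edge r) c).1 w by rw [hsσ]]
    simp [Fintype.linearCombination_apply, Fintype.sum_option, suppValRow, Fintype.sum_prod_type,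
      y, Prod.fst_sum, Finset.sum_apply, ite_and, Pi.single_apply, Finset.sum_ite_mem, mul_sub,
      Finset.sum_sub_distrib, Finset.sum_filter]
  · have := congrArg Prod.snd hsσ
    simp only [Fintype.linearCombination_apply, suppValRow, ite_and, Fintype.sum_option,
      Prod.smul_mk, smul_zero, smul_eq_mul, mul_one, smul_ite, Fintype.sum_prod_type, sum_ite_irrel,
      sum_ite_mem, univ_inter, sum_const_zero, Prod.snd_add, Prod.snd_sum] at this
    rw [← this]
    simp only [y, mul_comm (r _), Finset.sum_mul]
    exact le_add_of_nonneg_left (hc none)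

theorem mk_suppVal_mem_linearCombination_image_Ici (hw : ∀ e, 0 ≤ w e) {μ : E → ℝ}
    (hμ : μ ∈ MassSet edge s) :
    (s, suppVal edge hne w s r) ∈ Fintype.linearCombination ℝ (suppValRow edge r) '' Set.Ici 0 := by
  by_contra h
  obtain ⟨f, hf, hfpos⟩ := exists_dual_of_notMem_linearCombination_image_Ici _ h
  set φ : V → ℝ := fun v => f (Pi.single v 1, 0)
  set c := f (0, 1)
  have hf' : ∀ x t, f (x, t) = ∑ v, x v * φ v + t * c := fun x t => by
    simpa using LinearMap.apply_prod_eq_sum (f : (V → ℝ) × ℝ →ₗ[ℝ] ℝ) x t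
  have hrow : ∀ e, ∀ u ∈ edge e, ∀ v ∈ edge e, φ u - φ v ≤ -c * r e := by
    intro e u hu v hv
    have := hf (some (e, u, v))
    simp only [suppValRow, if_pos (And.intro hu hv), hf'] at this
    simp only [Pi.sub_apply, Pi.single_apply, sub_mul, ite_mul, one_mul, zero_mul,
      sum_sub_distrib, sum_ite_eq', mem_univ, ↓reduceIte] at this
    linarith
  rw [hf'] at hfpos
  rcases (show c ≤ 0 from hf none).lt_or_eq with hc | hc
  · have hx : ∀ e, eRange edge hne (fun v => φ v / -c) e ≤ r e := fun e =>
      (eRange_le_iff edge hne).2 fun u hu v hv => by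
        rw [div_sub_div_same, div_le_iff₀ (neg_pos.2 hc)]
        linarith [hrow e u hu v hv]
    have := le_suppVal edge hne hw hμ hx
    simp only [mul_div_assoc', ← Finset.sum_div] at this
    rw [div_le_iff₀ (neg_pos.2 hc)] at this
    linarith
  · have hx : ∀ e, eRange edge hne φ e ≤ 0 := fun e =>
      (eRange_le_iff edge hne).2 fun u hu v hv => by simpa [hc] using hrow e u hu v hv
    have := sum_mul_le_of_eRange_le edge hne hμ (r := fun _ => 0) hx
    simp only [hc, mul_zero, add_zero, zero_mul, Finset.sum_const_zero] at hfpos this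
    linarith

theorem suppVal_eq_sum_mul_of_forall_le (hw : ∀ e, 0 ≤ w e) (hr : ∀ e, 0 ≤ r e) {μ : E → ℝ}
    (hμ : μ ∈ MassSet edge s) (hmin : ∀ ν ∈ MassSet edge s, ∑ e, r e * μ e ≤ ∑ e, r e * ν e) :
    suppVal edge hne w s r = ∑ e, r e * μ e := by
  refine le_antisymm (suppVal_le edge hne hr hμ) ?_
  obtain ⟨c, hc, hcs⟩ := mk_suppVal_mem_linearCombination_image_Ici edge hne hw hμ
  obtain ⟨ν, hν, hcost⟩ := exists_mem_massSet_of_eq_linearCombination edge hc hcs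
  exact (hmin ν hν).trans hcost

/-- Weak duality `⟨s, x⟩ ≤ ∑ ν_e R_e(x)` combined with `ν R ≤ w R² / 2 + ν² / (2 w)` on each
edge. -/
theorem neg_qObj_le_Pobj (hw : ∀ e, 0 < w e) {ν : E → ℝ} (hν : ν ∈ MassSet edge s)
    (x : V → ℝ) : -qObj w ν ≤ Pobj edge hne w s x := by
  have hedge : ∀ e, ν e * eRange edge hne x e
      ≤ 1 / 2 * (w e * eRange edge hne x e ^ 2) + 1 / 2 * (ν e ^ 2 / w e) := fun e => by
    have key : 1 / 2 * (w e * eRange edge hne x e ^ 2) + 1 / 2 * (ν e ^ 2 / w e)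
        - ν e * eRange edge hne x e = (w e * eRange edge hne x e - ν e) ^ 2 / (2 * w e) := by
      field_simp [(hw e).ne']
      ring
    have := div_nonneg (sq_nonneg (w e * eRange edge hne x e - ν e)) (by linarith [hw e] :
      0 ≤ 2 * w e)
    linarith
  have hsum :=
    (sum_mul_le_sum_mul_eRange edge hne hν x).trans (Finset.sum_le_sum fun e _ => hedge e)
  rw [Finset.sum_add_distrib, ← Finset.mul_sum, ← Finset.mul_sum] at hsum
  unfold Pobj energyH qObj
  linarith

end Hypergraph

theorem stmt13_general (edge : E → Finset V) (hne : ∀ e, (edge e).Nonempty)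
    (w : E → ℝ) (hw : ∀ e, 0 < w e) (s : V → ℝ)
    (μ μstar μbar : E → ℝ)
    (hμ : μ ∈ MassSet edge s)
    (hμstar : μstar ∈ MassSet edge s ∧
      ∀ ν ∈ MassSet edge s, qObj w μstar ≤ qObj w ν)
    (hμbar : μbar ∈ MassSet edge s ∧
      ∀ ν ∈ MassSet edge s,
        ∑ e, (μ e / w e) * μbar e ≤ ∑ e, (μ e / w e) * ν e) :
    let r : E → ℝ := fun e => μ e / w e
    let δ : ℝ := qObj w μ - qObj w μstar
    let OPT : ℝ := sInf {c : ℝ | ∃ x : V → ℝ, memX0 edge w x ∧ c = Pobj edge hne w s x}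
    (0 ≤ 2 * qObj w μ - suppVal edge hne w s r) ∧
    (2 * qObj w μ - suppVal edge hne w s r = ∑ e, r e * (μ e - μbar e)) ∧
    (∑ e, r e * (μ e - μbar e)
      ≤ δ + Real.sqrt (2 * δ) * wInvNorm w (fun e => μ e - μbar e)) ∧
    ∀ xr : V → ℝ, memX0 edge w xr → (∀ e, eRange edge hne xr e ≤ r e) →
      (∀ y : V → ℝ, memX0 edge w y → (∀ e, eRange edge hne y e ≤ r e) →
        ∑ v, s v * y v ≤ ∑ v, s v * xr v) →
      Pobj edge hne w s xr - OPT
        ≤ Real.sqrt (2 * δ) * wInvNorm w (fun e => μ e - μbar e) := by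
  intro r δ OPT
  obtain ⟨hstar, hstar_min⟩ := hμstar
  obtain ⟨hbar, hbar_min⟩ := hμbar
  have hL : suppVal edge hne w s r = ∑ e, r e * μbar e :=
    suppVal_eq_sum_mul_of_forall_le edge hne (fun e => (hw e).le)
      (fun e => div_nonneg (hμ.1 e) (hw e).le) hbar hbar_min
  have h2q : 2 * qObj w μ = ∑ e, r e * μ e := by
    rw [two_mul_qObj]
    exact Finset.sum_congr rfl fun e _ => by ring
  have hgap : 2 * qObj w μ - suppVal edge hne w s r = ∑ e, r e * (μ e - μbar e) := by
    simp only [hL, h2q, mul_sub, Finset.sum_sub_distrib]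
  have hfo := fun ν (hν : ν ∈ MassSet edge s) =>
    sum_div_mul_sub_nonneg_of_forall_qObj_le hw (convex_massSet edge s) hstar hstar_min hν
  have hbound := sum_div_mul_sub_le hw (hfo μ hμ) (hfo μbar hbar)
  refine ⟨by linarith [hbar_min μ hμ], hgap, hbound, fun xr hxr hxr_feas hxr_max => ?_⟩
  have hLxr : suppVal edge hne w s r = ∑ v, s v * xr v :=
    IsGreatest.csSup_eq ⟨⟨xr, hxr, hxr_feas, rfl⟩, by
      rintro _ ⟨y, hy, hy_feas, rfl⟩
      exact hxr_max y hy hy_feas⟩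
  have hOPT : -qObj w μstar ≤ OPT :=
    le_csInf ⟨_, 0, by simp [memX0], rfl⟩ (by
      rintro _ ⟨y, -, rfl⟩
      exact neg_qObj_le_Pobj edge hne hw hstar y)
  have hE := energyH_le_qObj edge hne hw hxr_feas
  unfold Pobj
  linarith

theorem stmt13 (edge : E → Finset V) (hne : ∀ e, (edge e).Nonempty)
    (w : E → ℝ) (hw : ∀ e, 0 < w e) (s : V → ℝ)
    (hconn : HConn edge) (hs : ∑ v, s v = 0)
    (μ μstar μbar : E → ℝ)
    (hμ : μ ∈ MassSet edge s)
    (hμstar : μstar ∈ MassSet edge s ∧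
      ∀ ν ∈ MassSet edge s, qObj w μstar ≤ qObj w ν)
    (hμbar : μbar ∈ MassSet edge s ∧
      ∀ ν ∈ MassSet edge s,
        ∑ e, (μ e / w e) * μbar e ≤ ∑ e, (μ e / w e) * ν e) :
    let r : E → ℝ := fun e => μ e / w e
    let δ : ℝ := qObj w μ - qObj w μstar
    let OPT : ℝ := sInf {c : ℝ | ∃ x : V → ℝ, memX0 edge w x ∧ c = Pobj edge hne w s x}
    (0 ≤ 2 * qObj w μ - suppVal edge hne w s r) ∧
    (2 * qObj w μ - suppVal edge hne w s r = ∑ e, r e * (μ e - μbar e)) ∧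
    (∑ e, r e * (μ e - μbar e)
      ≤ δ + Real.sqrt (2 * δ) * wInvNorm w (fun e => μ e - μbar e)) ∧
    ∀ xr : V → ℝ, memX0 edge w xr → (∀ e, eRange edge hne xr e ≤ r e) →
      (∀ y : V → ℝ, memX0 edge w y → (∀ e, eRange edge hne y e ≤ r e) →
        ∑ v, s v * y v ≤ ∑ v, s v * xr v) →
      Pobj edge hne w s xr - OPT
        ≤ Real.sqrt (2 * δ) * wInvNorm w (fun e => μ e - μbar e) :=
  stmt13_general edge hne w hw s μ μstar μbar hμ hμstar hμbar

end
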